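/- arXiv:0707.3863 — 5 statements merged into one kernel-verified Lean document; each statement's English description precedes it below -/
import Mathlib

section
/- Let m_1, ..., m_N be non-negative integers and Q ≥ 1 a real number. Define the cyclic distance |j-k|_* = min{|j-k|, |j-k+N|, |j-k-N|}. Then there exists a subset J' ⊆ {1,...,N} such that |j-k|_* ≥ Q(√(m_j) + √(m_k)) for all distinct j, k ∈ J', and ∑_{j=1}^N m_j ≤ 5Q ∑_{j∈J'} m_j^{3/2}. -/
/-!
Greedy selection: take an index `c` of maximal weight `m c`, keep it, and discard every `j`
that is too close to it, i.e. with `|j - c|_* < Q (√m_j + √m_c)`. All discarded indices lie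
within cyclic distance `2Q√m_c` of `c`, so there are at most `4Q√m_c + 1 ≤ 5Q√m_c` of them,
each of weight at most `m c`; their total weight is therefore paid for by `5Q m_c^{3/2}`.
Recursing on the remaining indices gives the separated set.
-/

open Finset

section Greedy

variable {α : Type*} [Fintype α] (d : α → α → ℝ) (m : α → ℕ) {Q : ℝ}

lemma sum_filter_lt_le_of_card_ball_le
    (hball : ∀ c (r : ℝ), 0 ≤ r → (#{j | d j c < r} : ℝ) ≤ 2 * r + 1)
    (hQ : 1 ≤ Q) {S : Finset α} {c : α} (hc_max : ∀ j ∈ S, m j ≤ m c) (hc : 1 ≤ m c) :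
    ∑ j ∈ S with d j c < Q * (√(m j) + √(m c)), (m j : ℝ) ≤
      5 * Q * ((m c : ℝ) * √(m c)) := by
  have hsqrt : 1 ≤ √(m c : ℝ) := Real.one_le_sqrt.mpr (by exact_mod_cast hc)
  have hQsqrt : 1 ≤ Q * √(m c) := by nlinarith
  set B := {j ∈ S | d j c < Q * (√(m j) + √(m c))}
  have hsub : B ⊆ ({j | d j c < 2 * Q * √(m c)} : Finset α) := by
    intro j hj
    simp only [B, mem_filter, mem_univ, true_and] at hj ⊢
    have : √(m j : ℝ) ≤ √(m c) := Real.sqrt_le_sqrt (by exact_mod_cast hc_max j hj.1)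
    nlinarith
  have hcard : (#B : ℝ) ≤ 5 * Q * √(m c) :=
    calc (#B : ℝ) ≤ (#{j | d j c < 2 * Q * √(m c)} : ℝ) := by
          exact_mod_cast card_le_card hsub
      _ ≤ 2 * (2 * Q * √(m c)) + 1 := hball c _ (by positivity)
      _ ≤ 5 * Q * √(m c) := by linarith
  calc ∑ j ∈ B, (m j : ℝ)
      ≤ ∑ j ∈ B, (m c : ℝ) :=
        sum_le_sum fun j hj => by exact_mod_cast hc_max j (mem_filter.mp hj).1
    _ = #B * (m c : ℝ) := by rw [sum_const, nsmul_eq_mul]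
    _ ≤ 5 * Q * √(m c) * m c := by gcongr
    _ = 5 * Q * ((m c : ℝ) * √(m c)) := by ring

theorem exists_separated_subset_of_card_ball_le [DecidableEq α]
    (hd_comm : ∀ a b, d a b = d b a) (hd_self : ∀ a, d a a = 0)
    (hball : ∀ c (r : ℝ), 0 ≤ r → (#{j | d j c < r} : ℝ) ≤ 2 * r + 1)
    (hQ : 1 ≤ Q) (S : Finset α) :
    ∃ J ⊆ S, (J : Set α).Pairwise (fun j k => Q * (√(m j) + √(m k)) ≤ d j k) ∧
      ∑ j ∈ S, (m j : ℝ) ≤ 5 * Q * ∑ j ∈ J, (m j : ℝ) * √(m j) := by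
  induction S using Finset.strongInduction with
  | H S ih =>
  by_cases hzero : ∀ j ∈ S, m j = 0
  · refine ⟨∅, empty_subset S, by simp, ?_⟩
    have : ∑ j ∈ S, (m j : ℝ) = 0 := sum_eq_zero fun j hj => by simp [hzero j hj]
    simp [this]
  push Not at hzero
  obtain ⟨j₀, hj₀S, hj₀⟩ := hzero
  obtain ⟨c, hcS, hc_max⟩ := exists_max_image S m ⟨j₀, hj₀S⟩
  have hc : 1 ≤ m c := by have := hc_max j₀ hj₀S; omega
  set B := {j ∈ S | d j c < Q * (√(m j) + √(m c))} with hB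
  have hcB : c ∈ B := by
    have : 0 < √(m c : ℝ) := Real.sqrt_pos.mpr (by exact_mod_cast hc)
    simp only [hB, mem_filter, hd_self]
    exact ⟨hcS, by positivity⟩
  have hBS : B ⊆ S := filter_subset _ _
  obtain ⟨J, hJS, hJsep, hJsum⟩ := ih (S \ B) (sdiff_ssubset hBS ⟨c, hcB⟩)
  have hfar : ∀ j ∈ J, Q * (√(m j) + √(m c)) ≤ d j c := by
    intro j hj
    obtain ⟨hjS, hjB⟩ := mem_sdiff.mp (hJS hj)
    simpa [hB, hjS] using hjB
  refine ⟨insert c J, insert_subset hcS (hJS.trans sdiff_subset), ?_, ?_⟩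
  · rw [coe_insert, Set.pairwise_insert]
    refine ⟨hJsep, fun j hj _ => ⟨?_, hfar j hj⟩⟩
    rw [hd_comm, add_comm]
    exact hfar j hj
  · have hcJ : c ∉ J := fun h => (mem_sdiff.mp (hJS h)).2 hcB
    have hBsum := sum_filter_lt_le_of_card_ball_le d m hball hQ hc_max hc
    rw [← sum_sdiff hBS, sum_insert hcJ, mul_add]
    linarith

end Greedy

section CyclicDistance

variable (N : ℕ)

def cycDist (j k : Fin N) : ℤ :=
  min |(j : ℤ) - k| (min |(j : ℤ) - k + N| |(j : ℤ) - k - N|)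

lemma cycDist_comm (j k : Fin N) : cycDist N j k = cycDist N k j := by
  simp only [cycDist]
  rw [abs_sub_comm, ← abs_neg ((j : ℤ) - k + N), ← abs_neg ((j : ℤ) - k - N)]
  rw [min_comm |-((j : ℤ) - k + N)|]
  ring_nf

lemma cycDist_self (j : Fin N) : cycDist N j j = 0 := by
  simp [cycDist]

lemma exists_eq_add_of_cycDist (j c : Fin N) :
    ∃ i : ℤ, |i| = cycDist N j c ∧ ((j : ℤ) : ZMod N) = (c : ℤ) + i := by
  unfold cycDist
  rcases min_choice |(j : ℤ) - c| (min |(j : ℤ) - c + N| |(j : ℤ) - c - N|) with h | h <;>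
    rw [h]
  · exact ⟨(j : ℤ) - c, rfl, by push_cast; ring⟩
  rcases min_choice |(j : ℤ) - c + N| |(j : ℤ) - c - N| with h' | h' <;> rw [h']
  · exact ⟨(j : ℤ) - c + N, rfl, by push_cast [ZMod.natCast_self]; ring⟩
  · exact ⟨(j : ℤ) - c - N, rfl, by push_cast [ZMod.natCast_self]; ring⟩

lemma card_filter_cycDist_le (c : Fin N) (n : ℕ) : #{j | cycDist N j c ≤ n} ≤ 2 * n + 1 := by
  set S : Finset (Fin N) := {j | cycDist N j c ≤ n}
  have hinj : Set.InjOn (fun j : Fin N => ((j : ℤ) : ZMod N)) S := by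
    intro j _ k _ hjk
    have : ((j : ℕ) : ZMod N) = (k : ℕ) := by exact_mod_cast hjk
    rw [ZMod.natCast_eq_natCast_iff', Nat.mod_eq_of_lt j.isLt, Nat.mod_eq_of_lt k.isLt] at this
    exact Fin.ext this
  have hmaps : S.image (fun j : Fin N => ((j : ℤ) : ZMod N)) ⊆
      (Icc (-n : ℤ) n).image fun i : ℤ => ((c : ℤ) : ZMod N) + i := by
    intro x hx
    obtain ⟨j, hj, rfl⟩ := mem_image.mp hx
    obtain ⟨i, hi, hji⟩ := exists_eq_add_of_cycDist N j c
    have hjn : cycDist N j c ≤ n := (mem_filter.mp hj).2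
    exact mem_image.mpr ⟨i, mem_Icc.mpr (abs_le.mp (hi ▸ hjn)), hji.symm⟩
  calc #S = #(S.image fun j : Fin N => ((j : ℤ) : ZMod N)) := (card_image_of_injOn hinj).symm
    _ ≤ #((Icc (-n : ℤ) n).image fun i : ℤ => ((c : ℤ) : ZMod N) + i) := card_le_card hmaps
    _ ≤ #(Icc (-n : ℤ) n) := card_image_le
    _ = 2 * n + 1 := by rw [Int.card_Icc]; omega

lemma card_filter_cycDist_lt_le (c : Fin N) {r : ℝ} (hr : 0 ≤ r) :
    (#{j | (cycDist N j c : ℝ) < r} : ℝ) ≤ 2 * r + 1 := by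
  have hsub : ({j | (cycDist N j c : ℝ) < r} : Finset (Fin N)) ⊆
      ({j | cycDist N j c ≤ ⌊r⌋₊} : Finset (Fin N)) := by
    intro j hj
    simp only [mem_filter, mem_univ, true_and] at hj ⊢
    rw [Int.natCast_floor_eq_floor hr]
    exact Int.le_floor.mpr hj.le
  calc (#{j | (cycDist N j c : ℝ) < r} : ℝ) ≤ (2 * ⌊r⌋₊ + 1 : ℕ) := by
        exact_mod_cast (card_le_card hsub).trans (card_filter_cycDist_le N c _)
    _ ≤ 2 * r + 1 := by push_cast; linarith [Nat.floor_le hr]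

end CyclicDistance

theorem stmt_0_general (N : ℕ) (m : Fin N → ℕ) (Q : ℝ) (hQ : 1 ≤ Q) :
    ∃ J' : Finset (Fin N),
      (∀ j ∈ J', ∀ k ∈ J', j ≠ k →
        Q * (Real.sqrt (m j) + Real.sqrt (m k)) ≤
          ((min (|(j : ℤ) - (k : ℤ)|)
            (min (|(j : ℤ) - (k : ℤ) + N| ) (|(j : ℤ) - (k : ℤ) - N|)) : ℤ) : ℝ)) ∧
      (∑ j, (m j : ℝ)) ≤ 5 * Q * ∑ j ∈ J', (m j : ℝ) * Real.sqrt (m j) := by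
  obtain ⟨J, -, hsep, hsum⟩ := exists_separated_subset_of_card_ball_le
    (fun j k => (cycDist N j k : ℝ)) m (fun j k => by rw [cycDist_comm])
    (fun j => by simp [cycDist_self]) (fun c _ => card_filter_cycDist_lt_le N c) hQ univ
  exact ⟨J, fun j hj k hk hjk => hsep hj hk hjk, hsum⟩

/-- Combinatorial lemma: cyclic separation with weight control. -/
theorem stmt_0 (N : ℕ) (hN : 0 < N) (m : Fin N → ℕ) (Q : ℝ) (hQ : 1 ≤ Q) :
    ∃ J' : Finset (Fin N),
      (∀ j ∈ J', ∀ k ∈ J', j ≠ k →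
        Q * (Real.sqrt (m j) + Real.sqrt (m k)) ≤
          ((min (|(j : ℤ) - (k : ℤ)|)
            (min (|(j : ℤ) - (k : ℤ) + N| ) (|(j : ℤ) - (k : ℤ) - N|)) : ℤ) : ℝ)) ∧
      (∑ j, (m j : ℝ)) ≤ 5 * Q * ∑ j ∈ J', (m j : ℝ) * Real.sqrt (m j) :=
  stmt_0_general N m Q hQ
end

section
/- For all positive reals k and t, k·log t − t ≤ k·log k − k − (√t − √k)². -/
theorem stmt_3 (k t : ℝ) (hk : 0 < k) (ht : 0 < t) :
    k * Real.log t - t ≤ k * Real.log k - k - (Real.sqrt t - Real.sqrt k) ^ 2 := by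
  have hsk : 0 < Real.sqrt k := Real.sqrt_pos.mpr hk
  have hst : 0 < Real.sqrt t := Real.sqrt_pos.mpr ht
  have h1 : Real.log (Real.sqrt t / Real.sqrt k) ≤ Real.sqrt t / Real.sqrt k - 1 :=
    Real.log_le_sub_one_of_pos (by positivity)
  have hlog : Real.log (Real.sqrt t / Real.sqrt k) = (Real.log t - Real.log k) / 2 := by
    rw [Real.log_div (ne_of_gt hst) (ne_of_gt hsk), Real.log_sqrt ht.le, Real.log_sqrt hk.le]
    ring
  have hdiv : Real.sqrt t / Real.sqrt k = Real.sqrt t * (Real.sqrt k)⁻¹ := by ring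
  have hk2 : Real.sqrt k * Real.sqrt k = k := Real.mul_self_sqrt hk.le
  have ht2 : Real.sqrt t * Real.sqrt t = t := Real.mul_self_sqrt ht.le
  rw [hlog, hdiv] at h1
  have hinv : (Real.sqrt k)⁻¹ = Real.sqrt k / k := by
    rw [eq_div_iff hk.ne', inv_mul_eq_div, div_eq_iff (ne_of_gt hsk), hk2]
  rw [hinv] at h1
  have h2 := mul_le_mul_of_nonneg_left h1 hk.le
  have h3 : k * (Real.sqrt t * (Real.sqrt k / k) - 1) = Real.sqrt t * Real.sqrt k - k := by
    field_simp
  rw [h3] at h2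
  nlinarith [h2, hk2, ht2]
end

section
/- Let k be a positive integer and let u ≥ k be a real number. Then ∫_u^∞ (t^k e^{-t} / k!) dt ≤ e^{-(√u − √k)²}. -/
/-!
The tail of the Gamma(k+1) law is the Poisson probability `e^{-u} ∑_{j ≤ k} u^j / j!`: the
integrand is the derivative of `-e^{-t} ∑_{j ≤ k} t^j / j!`. For `j ≤ k ≤ u` we have
`u^j ≤ (u/k)^k k^j`, so the sum is at most `(u/k)^k e^k`. Finally `log y ≤ y - 1` at
`y = √(u/k)` gives `k log (u/k) ≤ 2√(uk) - 2k`, which is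
`e^{-u} (u/k)^k e^k ≤ e^{-(√u - √k)^2}`.
-/

open MeasureTheory Real Filter Topology Finset
open scoped Nat

noncomputable def expPartialSum (n : ℕ) (x : ℝ) : ℝ :=
  ∑ j ∈ range (n + 1), x ^ j / j !

theorem expPartialSum_succ (n : ℕ) (x : ℝ) :
    expPartialSum (n + 1) x = expPartialSum n x + x ^ (n + 1) / (n + 1)! :=
  sum_range_succ _ _

theorem hasDerivAt_expPartialSum (n : ℕ) (x : ℝ) :
    HasDerivAt (expPartialSum n) (expPartialSum n x - x ^ n / n !) x := by
  induction n with
  | zero =>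
    have h0 : expPartialSum 0 = fun _ => 1 := funext fun t => by simp [expPartialSum]
    simpa [h0] using hasDerivAt_const x (1 : ℝ)
  | succ n ih =>
    have hpow : HasDerivAt (fun t : ℝ => t ^ (n + 1) / (n + 1)!) (x ^ n / n !) x := by
      refine ((hasDerivAt_pow (n + 1) x).div_const _).congr_deriv ?_
      rw [Nat.factorial_succ]
      push_cast
      field_simp
    rw [funext (expPartialSum_succ n)]
    refine (ih.add hpow).congr_deriv ?_
    dsimp only
    ring

theorem hasDerivAt_neg_exp_neg_mul_expPartialSum (n : ℕ) (x : ℝ) :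
    HasDerivAt (fun t => -(exp (-t) * expPartialSum n t)) (x ^ n * exp (-x) / n !) x :=
  ((hasDerivAt_neg' x).exp.mul (hasDerivAt_expPartialSum n x)).neg.congr_deriv (by ring)

theorem tendsto_exp_neg_mul_expPartialSum_atTop (n : ℕ) :
    Tendsto (fun t => exp (-t) * expPartialSum n t) atTop (𝓝 0) := by
  have h := tendsto_finsetSum (range (n + 1)) fun j _ =>
    (tendsto_pow_mul_exp_neg_atTop_nhds_zero j).div_const (j ! : ℝ)
  simp only [zero_div, sum_const_zero] at h
  refine h.congr fun t => ?_
  rw [expPartialSum, mul_sum]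
  exact sum_congr rfl fun j _ => by ring

theorem integrableOn_pow_mul_exp_neg_Ioi (n : ℕ) (u : ℝ) :
    IntegrableOn (fun t : ℝ => t ^ n * exp (-t)) (Set.Ioi u) := by
  refine integrable_of_isBigO_exp_neg (b := 1 / 2) (by norm_num) (by fun_prop) ?_
  have h := (isLittleO_pow_exp_pos_mul_atTop n (b := 1 / 2) (by norm_num)).isBigO.mul
    (Asymptotics.isBigO_refl (fun t : ℝ => exp (-t)) atTop)
  refine h.congr_right fun t => ?_
  rw [← exp_add]
  ring_nf

theorem integral_Ioi_pow_mul_exp_neg_div_factorial (n : ℕ) (u : ℝ) :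
    ∫ t in Set.Ioi u, t ^ n * exp (-t) / n ! = exp (-u) * expPartialSum n u := by
  rw [integral_Ioi_of_hasDerivAt_of_tendsto'
    (fun x _ => hasDerivAt_neg_exp_neg_mul_expPartialSum n x)
    ((integrableOn_pow_mul_exp_neg_Ioi n u).div_const _)
    (tendsto_exp_neg_mul_expPartialSum_atTop n).neg]
  ring

theorem expPartialSum_le_div_pow_mul_exp {x u : ℝ} (hx : 0 < x) (hxu : x ≤ u) (n : ℕ) :
    expPartialSum n u ≤ (u / x) ^ n * exp x := by
  calc expPartialSum n u = ∑ j ∈ range (n + 1), (u / x) ^ j * (x ^ j / j !) := by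
        refine sum_congr rfl fun j _ => ?_
        rw [div_pow]
        field_simp
    _ ≤ ∑ j ∈ range (n + 1), (u / x) ^ n * (x ^ j / j !) := by
        refine sum_le_sum fun j hj => ?_
        gcongr
        · exact (one_le_div hx).2 hxu
        · exact Nat.lt_succ_iff.1 (mem_range.1 hj)
    _ ≤ (u / x) ^ n * exp x := by
        rw [← mul_sum]
        have : 0 ≤ u / x := div_nonneg (hx.le.trans hxu) hx.le
        gcongr
        exact sum_le_exp_of_nonneg hx.le _

theorem mul_log_div_le {x u : ℝ} (hx : 0 < x) (hu : 0 < u) :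
    x * log (u / x) ≤ u - x - (√u - √x) ^ 2 := by
  have hsx : 0 < √x := sqrt_pos.2 hx
  have hsu : 0 < √u := sqrt_pos.2 hu
  have hlog : log (u / x) = 2 * log (√u / √x) := by
    rw [← sqrt_div' u hx.le, Real.log_sqrt (div_pos hu hx).le]
    ring
  have hle := log_le_sub_one_of_pos (div_pos hsu hsx)
  calc x * log (u / x) ≤ √x ^ 2 * (2 * (√u / √x - 1)) := by
        rw [hlog, sq_sqrt hx.le]
        gcongr
    _ = u - x - (√u - √x) ^ 2 := by
        field_simp
        linear_combination sq_sqrt hu.le - sq_sqrt hx.le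

theorem stmt_4 (k : ℕ) (hk : 0 < k) (u : ℝ) (hu : (k : ℝ) ≤ u) :
    ∫ t in Set.Ioi u, t ^ k * Real.exp (-t) / (Nat.factorial k) ≤
      Real.exp (-(Real.sqrt u - Real.sqrt k) ^ 2) := by
  have hk0 : (0 : ℝ) < k := Nat.cast_pos.2 hk
  have hu0 : 0 < u := hk0.trans_le hu
  have hpow : (u / k) ^ k = exp (k * log (u / k)) := by
    rw [← rpow_natCast, rpow_def_of_pos (div_pos hu0 hk0), mul_comm]
  calc ∫ t in Set.Ioi u, t ^ k * exp (-t) / k ! = exp (-u) * expPartialSum k u :=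
        integral_Ioi_pow_mul_exp_neg_div_factorial k u
    _ ≤ exp (-u) * ((u / k) ^ k * exp k) := by
        gcongr
        exact expPartialSum_le_div_pow_mul_exp hk0 hu k
    _ = exp (-u + k * log (u / k) + k) := by rw [hpow, exp_add, exp_add]; ring
    _ ≤ exp (-(√u - √k) ^ 2) := by
        gcongr
        linarith [mul_log_div_le hk0 hu0]
end

section
/- Let k be a positive integer and d ≥ 0. Then ∫_{(√k + d)²}^∞ (t^k / k!) e^{-t} dt ≤ e^{-d²}. -/
/-!
Integrating by parts `k` times, the tail `∫_a^∞ tᵏ/k! e^{-t} dt` equals the Poisson probability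
`e^{-a} ∑_{j ≤ k} aʲ/j!`. For `a ≥ k` the Chernoff-type estimate `aʲ ≤ (a/k)ᵏ kʲ` (`j ≤ k`)
bounds it by `e^{k-a} (a/k)ᵏ`, and at `a = (√k + d)²` the estimate `1 + d/√k ≤ e^{d/√k}` turns
this into `e^{-d²}`.
-/

open Real Finset Filter Topology MeasureTheory
open scoped Nat

theorem hasDerivAt_sum_range_pow_div_factorial (k : ℕ) (t : ℝ) :
    HasDerivAt (fun t : ℝ => ∑ j ∈ range (k + 1), t ^ j / j !) (∑ j ∈ range k, t ^ j / j !) t := by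
  induction k with
  | zero => simpa using hasDerivAt_const t (1 : ℝ)
  | succ k ih =>
    simp_rw [sum_range_succ _ (k + 1)]
    refine (ih.add ((hasDerivAt_pow (k + 1) t).div_const ((k + 1)! : ℝ))).congr_deriv ?_
    rw [sum_range_succ, Nat.factorial_succ]
    push_cast
    field_simp

theorem hasDerivAt_neg_exp_neg_mul_sum_range (k : ℕ) (t : ℝ) :
    HasDerivAt (fun t => -(exp (-t) * ∑ j ∈ range (k + 1), t ^ j / j !))
      (t ^ k / k ! * exp (-t)) t := by
  have hexp : HasDerivAt (fun t => exp (-t)) (-exp (-t)) t := by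
    simpa using (hasDerivAt_neg t).exp
  refine (hexp.mul (hasDerivAt_sum_range_pow_div_factorial k t)).neg.congr_deriv ?_
  rw [sum_range_succ]
  ring

theorem tendsto_exp_neg_mul_sum_range (k : ℕ) :
    Tendsto (fun t => exp (-t) * ∑ j ∈ range (k + 1), t ^ j / j !) atTop (𝓝 0) := by
  simp_rw [mul_sum]
  simpa using tendsto_finsetSum (range (k + 1)) fun j _ =>
    ((tendsto_pow_mul_exp_neg_atTop_nhds_zero j).div_const (j ! : ℝ)).congr fun t => by ring

theorem integral_Ioi_pow_div_factorial_mul_exp_neg (k : ℕ) {a : ℝ} (ha : 0 ≤ a) :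
    ∫ t in Set.Ioi a, t ^ k / k ! * exp (-t) = exp (-a) * ∑ j ∈ range (k + 1), a ^ j / j ! := by
  rw [integral_Ioi_of_hasDerivAt_of_nonneg' (fun t _ => hasDerivAt_neg_exp_neg_mul_sum_range k t)
    (fun t ht => by have : 0 < t := ha.trans_lt ht; positivity)
    (by simpa using (tendsto_exp_neg_mul_sum_range k).neg)]
  ring

theorem exp_neg_mul_sum_range_le {k : ℕ} (hk : 0 < k) {a : ℝ} (hka : (k : ℝ) ≤ a) :
    exp (-a) * ∑ j ∈ range (k + 1), a ^ j / j ! ≤ exp (k - a) * (a / k) ^ k := by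
  have hk0 : (0 : ℝ) < k := by exact_mod_cast hk
  have hratio : 1 ≤ a / k := (one_le_div hk0).mpr hka
  have hsum : ∑ j ∈ range (k + 1), a ^ j / j ! ≤ (a / k) ^ k * exp k :=
    calc ∑ j ∈ range (k + 1), a ^ j / j !
        = ∑ j ∈ range (k + 1), (a / k) ^ j * ((k : ℝ) ^ j / j !) := by
          refine sum_congr rfl fun j _ => ?_
          rw [div_pow]
          field_simp
      _ ≤ ∑ j ∈ range (k + 1), (a / k) ^ k * ((k : ℝ) ^ j / j !) := by
          gcongr with j hj
          exact Nat.lt_succ_iff.mp (mem_range.mp hj)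
      _ ≤ (a / k) ^ k * exp k := by
          rw [← mul_sum]
          gcongr
          exact sum_le_exp_of_nonneg hk0.le (k + 1)
  calc exp (-a) * ∑ j ∈ range (k + 1), a ^ j / j !
      ≤ exp (-a) * ((a / k) ^ k * exp k) := by gcongr
    _ = exp (k - a) * (a / k) ^ k := by rw [sub_eq_neg_add, exp_add]; ring

theorem exp_sub_mul_div_pow_le {k : ℕ} (hk : 0 < k) {d : ℝ} (hd : 0 ≤ d) :
    exp (k - (√k + d) ^ 2) * ((√k + d) ^ 2 / k) ^ k ≤ exp (-d ^ 2) := by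
  have hk0 : (0 : ℝ) < k := by exact_mod_cast hk
  set s := √k
  have hs : 0 < s := sqrt_pos.mpr hk0
  have hs2 : s ^ 2 = k := sq_sqrt hk0.le
  have hpow : ((s + d) ^ 2 / k) ^ k ≤ exp (2 * d * s) :=
    calc ((s + d) ^ 2 / k) ^ k = (1 + d / s) ^ (2 * k) := by
          rw [pow_mul, ← hs2]; field_simp
      _ ≤ exp (d / s) ^ (2 * k) := by
          gcongr
          linarith [add_one_le_exp (d / s)]
      _ = exp (2 * d * s) := by
          rw [← exp_nat_mul]; push_cast; rw [← hs2]; field_simp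
  calc exp (k - (s + d) ^ 2) * ((s + d) ^ 2 / k) ^ k
      ≤ exp (k - (s + d) ^ 2) * exp (2 * d * s) := by gcongr
    _ = exp (-d ^ 2) := by rw [← exp_add, ← hs2]; ring_nf

theorem stmt_5 (k : ℕ) (hk : 0 < k) (d : ℝ) (hd : 0 ≤ d) :
    ∫ t in Set.Ioi ((Real.sqrt k + d) ^ 2), t ^ k / (Nat.factorial k) * Real.exp (-t) ≤
      Real.exp (-d ^ 2) := by
  have hka : (k : ℝ) ≤ (√k + d) ^ 2 := by
    calc (k : ℝ) = √k ^ 2 := (sq_sqrt k.cast_nonneg).symm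
      _ ≤ (√k + d) ^ 2 := by gcongr; linarith
  rw [integral_Ioi_pow_div_factorial_mul_exp_neg k (sq_nonneg _)]
  exact (exp_neg_mul_sum_range_le hk hka).trans (exp_sub_mul_div_pow_le hk hd)
end

section
/- Let f be a Gaussian Entire Function f(z) = ∑_{k≥0} ζ_k z^k/√(k!) with ζ_k i.i.d. standard complex Gaussian. Then for each r ≥ 1 and m ≥ 3, P(max_{|z|≤r} |f(z)| ≤ e^{-m r²}) ≤ exp(−(m²/log m)·r⁴). -/
open MeasureTheory ProbabilityTheory

/-- The law of a standard complex Gaussian: density `(1/π) e^{-|w|²}` w.r.t.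
Lebesgue measure on `ℂ`. -/
noncomputable def stdComplexGaussian : Measure ℂ :=
  volume.withDensity fun w => ENNReal.ofReal (Real.exp (-‖w‖ ^ 2) / Real.pi)

/-!
By Cauchy's inequalities the event `max_{|z| ≤ r} |f| ≤ e^{-mr²}` forces the independent events
`|ζ_n| ≤ √(n!) r^{-n} e^{-mr²}` for `n < N := ⌈mr² / log m⌉`. A standard complex Gaussian lies in
a disc of radius `s` with probability at most `s²`, and for `n < N` we have
`n! r^{-2n} ≤ (mr²)^n r^{-2n} = m^n ≤ e^{mr²}`, so each of the `N` factors is at most `e^{-mr²}`.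
Cauchy's inequalities need the series to converge beyond the disc; this holds almost surely since
`E|ζ_k| < ∞` and `∑ (2r)^k / √(k!) < ∞`.
-/

open Metric Finset
open scoped ENNReal Nat

theorem norm_coeff_mul_pow_le_of_forall_mem_sphere_norm_le {a : ℕ → ℂ} {r R M : ℝ}
    (hr : 0 < r) (hrR : r < R) (hsum : Summable fun k => ‖a k‖ * R ^ k)
    (hbd : ∀ z ∈ sphere (0 : ℂ) r, ‖∑' k, a k * z ^ k‖ ≤ M) (n : ℕ) :
    ‖a n‖ * r ^ n ≤ M := by
  set p := FormalMultilinearSeries.ofScalars ℂ a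
  have hR : ENNReal.ofReal R ≤ p.radius := by
    rw [ENNReal.ofReal]
    refine p.le_radius_of_summable_norm ?_
    simpa [p, Real.coe_toNNReal R (hr.trans hrR).le] using hsum
  have hp : HasFPowerSeriesOnBall p.sum p 0 p.radius :=
    p.hasFPowerSeriesOnBall (lt_of_lt_of_le (by simpa using hr.trans hrR) hR)
  have hdiff : DiffContOnCl ℂ p.sum (ball 0 r) := by
    refine (hp.differentiableOn.mono ?_).diffContOnCl
    rw [closure_ball 0 hr.ne']
    intro z hz
    rw [mem_closedBall, dist_zero_right] at hz
    refine mem_eball.2 (lt_of_lt_of_le ?_ hR)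
    rw [edist_zero_right, ← ofReal_norm]
    exact ENNReal.ofReal_lt_ofReal_iff'.2 ⟨hz.trans_lt hrR, hr.trans hrR⟩
  have hcoeff : a n = iteratedDeriv n p.sum 0 / n ! := by
    have := congr_arg (fun q : FormalMultilinearSeries ℂ ℂ ℂ => q.coeff n)
      (hp.hasFPowerSeriesAt.eq_formalMultilinearSeries hp.analyticAt.hasFPowerSeriesAt)
    simpa [p, FormalMultilinearSeries.coeff_ofScalars] using this
  have hcauchy := Complex.norm_iteratedDeriv_le_of_forall_mem_sphere_norm_le n hr hdiff
    fun z hz => (congr_arg norm (FormalMultilinearSeries.ofScalars_sum_eq a z)).trans_le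
      (hbd z hz)
  rw [hcoeff, norm_div, Complex.norm_natCast, div_mul_eq_mul_div, div_le_iff₀ (by positivity)]
  rw [le_div_iff₀ (by positivity)] at hcauchy
  linarith

theorem norm_le_sqrt_factorial_div_pow_mul_of_forall_mem_sphere {ζ : ℕ → ℂ} {r R M : ℝ}
    (hr : 0 < r) (hrR : r < R) (hsum : Summable fun k => ‖ζ k‖ * (R ^ k / √(k ! : ℝ)))
    (hbd : ∀ z ∈ sphere (0 : ℂ) r, ‖∑' k, ζ k * z ^ k / (√(k ! : ℝ) : ℂ)‖ ≤ M) (n : ℕ) :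
    ‖ζ n‖ ≤ √(n ! : ℝ) / r ^ n * M := by
  have hfac : ∀ k, 0 < √(k ! : ℝ) := fun k => Real.sqrt_pos.2 (by positivity)
  have hnorm : ∀ k, ‖ζ k / (√(k ! : ℝ) : ℂ)‖ = ‖ζ k‖ / √(k ! : ℝ) := fun k => by
    rw [norm_div, Complex.norm_real, Real.norm_of_nonneg (hfac k).le]
  have h := norm_coeff_mul_pow_le_of_forall_mem_sphere_norm_le (a := fun k => ζ k / √(k ! : ℝ))
    hr hrR (hsum.congr fun k => by rw [hnorm]; ring)
    (fun z hz => by simpa only [div_mul_eq_mul_div] using hbd z hz) n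
  rw [hnorm, div_mul_eq_mul_div, div_le_iff₀ (hfac n)] at h
  rw [div_mul_eq_mul_div, le_div_iff₀ (by positivity)]
  linarith

theorem summable_pow_div_sqrt_factorial (x : ℝ) :
    Summable fun k : ℕ => x ^ k / √(k ! : ℝ) := by
  refine Summable.of_norm_bounded
    (((Real.summable_pow_div_factorial (4 * x ^ 2)).add
      (summable_geometric_of_lt_one (by norm_num) (by norm_num : (1 / 4 : ℝ) < 1))).div_const 2)
    fun k => ?_
  have hfac : (0 : ℝ) < √(k ! : ℝ) := Real.sqrt_pos.2 (by positivity)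
  have hsq : √(k ! : ℝ) ^ 2 = k ! := Real.sq_sqrt (by positivity)
  -- AM-GM `2ab ≤ a² + b²` with `a = (2|x|)^k / √k!` and `b = 2^(-k)`
  have h := two_mul_le_add_sq ((2 * |x|) ^ k / √(k ! : ℝ)) ((1 / 2 : ℝ) ^ k)
  have hab : (2 * |x|) ^ k / √(k ! : ℝ) * (1 / 2 : ℝ) ^ k = |x| ^ k / √(k ! : ℝ) := by
    rw [div_mul_eq_mul_div, ← mul_pow]; ring_nf
  have ha : ((2 * |x|) ^ k / √(k ! : ℝ)) ^ 2 = (4 * x ^ 2) ^ k / k ! := by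
    rw [div_pow, hsq, ← pow_mul, mul_comm k, pow_mul, mul_pow, sq_abs]; norm_num
  have hb : ((1 / 2 : ℝ) ^ k) ^ 2 = (1 / 4) ^ k := by
    rw [← pow_mul, mul_comm, pow_mul]; norm_num
  rw [norm_div, norm_pow, Real.norm_of_nonneg hfac.le, Real.norm_eq_abs]
  rw [mul_assoc, hab, ha, hb] at h
  linarith

theorem ae_summable_norm_mul_of_lintegral_enorm_le {Ω E : Type*} [MeasurableSpace Ω]
    {μ : Measure Ω} [NormedAddCommGroup E] {ζ : ℕ → Ω → E}
    (hζ : ∀ k, AEStronglyMeasurable (ζ k) μ) {C : ℝ≥0∞} (hC : C ≠ ∞)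
    (hmom : ∀ k, ∫⁻ ω, ‖ζ k ω‖ₑ ∂μ ≤ C)
    {c : ℕ → ℝ} (hc0 : ∀ k, 0 ≤ c k) (hc : Summable c) :
    ∀ᵐ ω ∂μ, Summable fun k => ‖ζ k ω‖ * c k := by
  have hfin : ∫⁻ ω, ∑' k, ‖ζ k ω‖ₑ * ENNReal.ofReal (c k) ∂μ ≠ ∞ := by
    rw [lintegral_tsum fun k => ((hζ k).enorm.mul_const _)]
    refine ne_top_of_le_ne_top (b := (∑' k, ENNReal.ofReal (c k)) * C) ?_ ?_
    · rw [← ENNReal.ofReal_tsum_of_nonneg hc0 hc]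
      exact ENNReal.mul_ne_top ENNReal.ofReal_ne_top hC
    · rw [← ENNReal.tsum_mul_right]
      gcongr with k
      rw [lintegral_mul_const'' _ (hζ k).enorm, mul_comm]
      gcongr
      exact hmom k
  filter_upwards [ae_lt_top' (AEMeasurable.tsum fun k => (hζ k).enorm.mul_const _) hfin]
    with ω hω
  simpa [ENNReal.toReal_mul, hc0] using ENNReal.summable_toReal hω.ne

theorem lintegral_enorm_stdComplexGaussian_lt_top :
    ∫⁻ w, ‖w‖ₑ ∂stdComplexGaussian < ∞ := by
  have hint : Integrable fun w : ℂ => Real.exp (-(1 / 2) * ‖w‖ ^ 2) := by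
    simpa [Complex.norm_exp, ← Complex.ofReal_pow] using
      (GaussianFourier.integrable_cexp_neg_mul_sq_norm_add (V := ℂ) (b := (1 / 2 : ℂ))
        (by norm_num) 0 0).norm
  rw [stdComplexGaussian, lintegral_withDensity_eq_lintegral_mul _ (by fun_prop) (by fun_prop)]
  refine lt_of_le_of_lt (lintegral_mono fun w => ?_) hint.lintegral_lt_top
  simp only [Pi.mul_apply]
  rw [← ofReal_norm, ← ENNReal.ofReal_mul (by positivity)]
  refine ENNReal.ofReal_le_ofReal ?_
  have ht : ‖w‖ ≤ Real.exp (1 / 2 * ‖w‖ ^ 2) := by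
    nlinarith [sq_nonneg (‖w‖ - 1), Real.add_one_le_exp (1 / 2 * ‖w‖ ^ 2)]
  calc Real.exp (-‖w‖ ^ 2) / Real.pi * ‖w‖
      ≤ Real.exp (-‖w‖ ^ 2) * Real.exp (1 / 2 * ‖w‖ ^ 2) := by
        gcongr
        exact div_le_self (Real.exp_nonneg _) (by linarith [Real.pi_gt_three])
    _ = Real.exp (-(1 / 2) * ‖w‖ ^ 2) := by rw [← Real.exp_add]; ring_nf

theorem stdComplexGaussian_closedBall_le {s : ℝ} (hs : 0 ≤ s) :
    stdComplexGaussian (closedBall 0 s) ≤ ENNReal.ofReal (s ^ 2) := by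
  rw [stdComplexGaussian, withDensity_apply _ measurableSet_closedBall]
  calc ∫⁻ w in closedBall (0 : ℂ) s, ENNReal.ofReal (Real.exp (-‖w‖ ^ 2) / Real.pi)
      ≤ ∫⁻ _ in closedBall (0 : ℂ) s, ENNReal.ofReal (1 / Real.pi) := by
        gcongr with w
        exact Real.exp_le_one_iff.2 (by nlinarith [norm_nonneg w])
    _ = ENNReal.ofReal (s ^ 2) := by
        rw [setLIntegral_const, Complex.volume_closedBall, ← ENNReal.ofReal_coe_nnreal,
          NNReal.coe_real_pi, ← ENNReal.ofReal_pow hs, ← ENNReal.ofReal_mul (by positivity),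
          ← ENNReal.ofReal_mul (by positivity)]
        congr 1
        field_simp

theorem sq_sqrt_factorial_div_pow_mul_exp_le {r m : ℝ} (hr : 0 < r) (hm : Real.exp 1 ≤ m)
    {n : ℕ} (hn : n * Real.log m ≤ m * r ^ 2) :
    (√(n ! : ℝ) / r ^ n * Real.exp (-m * r ^ 2)) ^ 2 ≤ Real.exp (-(m * r ^ 2)) := by
  have hm0 : 0 < m := (Real.exp_pos 1).trans_le hm
  have hlog : 1 ≤ Real.log m := by simpa using Real.log_le_log (Real.exp_pos 1) hm
  have hnm : (n : ℝ) ≤ m * r ^ 2 := by nlinarith [(n.cast_nonneg : (0 : ℝ) ≤ n)]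
  have hfac : (n ! : ℝ) ≤ (m * r ^ 2) ^ n :=
    calc (n ! : ℝ) ≤ (n : ℝ) ^ n := mod_cast n.factorial_le_pow
      _ ≤ (m * r ^ 2) ^ n := by gcongr
  have hpow : m ^ n ≤ Real.exp (m * r ^ 2) := by
    rw [← Real.exp_log hm0, ← Real.exp_nat_mul, Real.exp_log hm0]
    exact Real.exp_le_exp.2 hn
  calc (√(n ! : ℝ) / r ^ n * Real.exp (-m * r ^ 2)) ^ 2
      = (n ! : ℝ) / (r ^ 2) ^ n * Real.exp (-(m * r ^ 2)) * Real.exp (-(m * r ^ 2)) := by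
        rw [mul_pow, div_pow, Real.sq_sqrt (by positivity), ← pow_mul, mul_comm n, pow_mul,
          sq (Real.exp _), neg_mul, mul_assoc]
    _ ≤ Real.exp (m * r ^ 2) * Real.exp (-(m * r ^ 2)) * Real.exp (-(m * r ^ 2)) := by
        gcongr
        rw [div_le_iff₀ (by positivity)]
        calc (n ! : ℝ) ≤ m ^ n * (r ^ 2) ^ n := by rwa [← mul_pow]
          _ ≤ _ := by gcongr
    _ = Real.exp (-(m * r ^ 2)) := by rw [← Real.exp_add]; simp

theorem prod_sq_sqrt_factorial_div_pow_mul_exp_le {r m : ℝ} (hr : 0 < r)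
    (hm : Real.exp 1 ≤ m) :
    ∏ n ∈ range ⌈m * r ^ 2 / Real.log m⌉₊, (√(n ! : ℝ) / r ^ n * Real.exp (-m * r ^ 2)) ^ 2 ≤
      Real.exp (-(m ^ 2 / Real.log m) * r ^ 4) := by
  have hm0 : 0 < m := (Real.exp_pos 1).trans_le hm
  have hlog : 0 < Real.log m := Real.log_pos (by linarith [Real.add_one_le_exp 1])
  set N := ⌈m * r ^ 2 / Real.log m⌉₊
  calc ∏ n ∈ range N, (√(n ! : ℝ) / r ^ n * Real.exp (-m * r ^ 2)) ^ 2
      ≤ ∏ _n ∈ range N, Real.exp (-(m * r ^ 2)) := by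
        refine prod_le_prod (fun n _ => by positivity) fun n hn => ?_
        refine sq_sqrt_factorial_div_pow_mul_exp_le hr hm ?_
        have : (n : ℝ) < m * r ^ 2 / Real.log m := Nat.lt_ceil.1 (mem_range.1 hn)
        rw [lt_div_iff₀ hlog] at this
        exact this.le
    _ = Real.exp (-(N * (m * r ^ 2))) := by
        rw [prod_const, card_range, ← Real.exp_nat_mul]; ring_nf
    _ ≤ Real.exp (-(m ^ 2 / Real.log m) * r ^ 4) := by
        have hN : m * r ^ 2 / Real.log m ≤ N := Nat.le_ceil _
        rw [Real.exp_le_exp, neg_mul, neg_le_neg_iff]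
        calc m ^ 2 / Real.log m * r ^ 4 = m * r ^ 2 / Real.log m * (m * r ^ 2) := by ring
          _ ≤ N * (m * r ^ 2) := by gcongr

/-- For a Gaussian Entire Function `f(z) = ∑ ζ_k z^k/√(k!)`, the probability that
`max_{|z|≤r} |f| ≤ e^{-mr²}` is at most `exp(-(m²/log m) r⁴)`. -/
theorem stmt_14 {Ω : Type*} [MeasurableSpace Ω] (μ : Measure Ω) [IsProbabilityMeasure μ]
    (ζ : ℕ → Ω → ℂ) (hmeas : ∀ k, Measurable (ζ k))
    (hindep : iIndepFun ζ μ)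
    (hlaw : ∀ k, μ.map (ζ k) = stdComplexGaussian)
    (f : Ω → ℂ → ℂ)
    (hf : ∀ ω z, f ω z = ∑' k, ζ k ω * z ^ k / (Real.sqrt (Nat.factorial k) : ℂ))
    (r m : ℝ) (hr : 1 ≤ r) (hm : 3 ≤ m) :
    μ {ω | ∀ z ∈ Metric.closedBall (0 : ℂ) r,
        ‖f ω z‖ ≤ Real.exp (-m * r ^ 2)} ≤
      ENNReal.ofReal (Real.exp (-(m ^ 2 / Real.log m) * r ^ 4)) := by
  have hr0 : 0 < r := one_pos.trans_le hr
  have hm' : Real.exp 1 ≤ m := by linarith [Real.exp_one_lt_d9]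
  set s : ℕ → ℝ := fun n => √(n ! : ℝ) / r ^ n * Real.exp (-m * r ^ 2)
  set N := ⌈m * r ^ 2 / Real.log m⌉₊
  have hsumm : ∀ᵐ ω ∂μ, Summable fun k => ‖ζ k ω‖ * ((2 * r) ^ k / √(k ! : ℝ)) := by
    refine ae_summable_norm_mul_of_lintegral_enorm_le (fun k => (hmeas k).aestronglyMeasurable)
      lintegral_enorm_stdComplexGaussian_lt_top.ne (fun k => ?_) (fun k => by positivity)
      (summable_pow_div_sqrt_factorial _)
    rw [← hlaw k, lintegral_map measurable_enorm (hmeas k)]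
  have hsub : {ω | ∀ z ∈ closedBall (0 : ℂ) r, ‖f ω z‖ ≤ Real.exp (-m * r ^ 2)} ≤ᵐ[μ]
      ⋂ n ∈ range N, ζ n ⁻¹' closedBall 0 (s n) := by
    filter_upwards [hsumm] with ω hω (hbd : ∀ z ∈ closedBall (0 : ℂ) r, _)
    refine Set.mem_iInter₂.2 fun n _ => mem_closedBall_zero_iff.2 <|
      norm_le_sqrt_factorial_div_pow_mul_of_forall_mem_sphere hr0 (by linarith) hω
        (fun z hz => ?_) n
    rw [← hf]
    exact hbd z (sphere_subset_closedBall hz)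
  calc μ {ω | ∀ z ∈ closedBall (0 : ℂ) r, ‖f ω z‖ ≤ Real.exp (-m * r ^ 2)}
      ≤ μ (⋂ n ∈ range N, ζ n ⁻¹' closedBall 0 (s n)) := measure_mono_ae hsub
    _ = ∏ n ∈ range N, stdComplexGaussian (closedBall 0 (s n)) := by
        rw [hindep.measure_inter_preimage_eq_mul _ fun _ _ => measurableSet_closedBall]
        refine prod_congr rfl fun n _ => ?_
        rw [← hlaw n, Measure.map_apply (hmeas n) measurableSet_closedBall]
    _ ≤ ∏ n ∈ range N, ENNReal.ofReal (s n ^ 2) :=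
        prod_le_prod' fun n _ => stdComplexGaussian_closedBall_le (by positivity)
    _ = ENNReal.ofReal (∏ n ∈ range N, s n ^ 2) :=
        (ENNReal.ofReal_prod_of_nonneg fun n _ => sq_nonneg _).symm
    _ ≤ ENNReal.ofReal (Real.exp (-(m ^ 2 / Real.log m) * r ^ 4)) :=
        ENNReal.ofReal_le_ofReal (prod_sq_sqrt_factorial_div_pow_mul_exp_le hr0 hm')
end
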